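/- Let L1, ..., Lk be distinct lines through the origin in ℝ², and let Q and Q' be two cells (connected components of the complement of the union of the lines) whose closures share a boundary ray. Then the union of the closures of Q and Q' is a convex set. -/
import Mathlib

open Set Topology Filter

private lemma cell_convex {k : ℕ} (a b c : Fin k → ℝ) :
    Convex ℝ {y : ℝ × ℝ | ∀ i, 0 < c i * (a i * y.1 + b i * y.2)} := by
  intro y hy z hz s t hs ht hst i
  have h1 := hy i
  have h2 := hz i
  have : (s • y + t • z : ℝ × ℝ).1 = s * y.1 + t * z.1 := rfl
  have h2' : (s • y + t • z : ℝ × ℝ).2 = s * y.2 + t * z.2 := rfl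
  rw [this, h2']
  rcases eq_or_lt_of_le hs with h | h
  · rcases eq_or_lt_of_le ht with h' | h'
    · exfalso; rw [← h, ← h'] at hst; norm_num at hst
    · nlinarith
  · nlinarith

private lemma cell_closure {k : ℕ} (a b c : Fin k → ℝ) (x : ℝ × ℝ)
    (hx : ∀ i, 0 < c i * (a i * x.1 + b i * x.2)) :
    closure {y : ℝ × ℝ | ∀ i, 0 < c i * (a i * y.1 + b i * y.2)} =
      {y : ℝ × ℝ | ∀ i, 0 ≤ c i * (a i * y.1 + b i * y.2)} := by
  apply subset_antisymm
  · apply closure_minimal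
    · intro y hy i; exact (hy i).le
    · have : {y : ℝ × ℝ | ∀ i, 0 ≤ c i * (a i * y.1 + b i * y.2)} =
        ⋂ i, {y : ℝ × ℝ | 0 ≤ c i * (a i * y.1 + b i * y.2)} := by
        ext y; simp
      rw [this]
      exact isClosed_iInter fun i => isClosed_le continuous_const (by fun_prop)
  · intro y hy
    have hne : (𝓝[>] (0:ℝ)).NeBot := inferInstance
    apply mem_closure_of_tendsto (f := fun t : ℝ => y + t • (x - y)) (b := 𝓝[>] (0:ℝ))
    · have : Filter.Tendsto (fun t : ℝ => y + t • (x - y)) (𝓝 0) (𝓝 y) := by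
        have hc : Continuous fun t : ℝ => y + t • (x - y) := by fun_prop
        simpa using hc.tendsto 0
      exact this.mono_left nhdsWithin_le_nhds
    · filter_upwards [Ioo_mem_nhdsGT_of_mem (Set.left_mem_Ico.2 one_pos)] with t ht
      intro i
      have h1 := hx i
      have h2 := hy i
      have e1 : (y + t • (x - y) : ℝ × ℝ).1 = y.1 + t * (x.1 - y.1) := rfl
      have e2 : (y + t • (x - y) : ℝ × ℝ).2 = y.2 + t * (x.2 - y.2) := rfl
      simp only [mem_setOf_eq, e1, e2]
      obtain ⟨ht0, ht1⟩ := ht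
      nlinarith

private lemma comp_eq {k : ℕ} (a b : Fin k → ℝ) (x : ℝ × ℝ)
    (hx : ∀ i, a i * x.1 + b i * x.2 ≠ 0) :
    connectedComponentIn {y : ℝ × ℝ | ∀ i, a i * y.1 + b i * y.2 ≠ 0} x =
      {y : ℝ × ℝ | ∀ i, 0 < (a i * x.1 + b i * x.2) * (a i * y.1 + b i * y.2)} := by
  set U := {y : ℝ × ℝ | ∀ i, a i * y.1 + b i * y.2 ≠ 0} with hU
  set S := {y : ℝ × ℝ | ∀ i, 0 < (a i * x.1 + b i * x.2) * (a i * y.1 + b i * y.2)} with hS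
  have hxU : x ∈ U := hx
  have hxS : x ∈ S := fun i => mul_self_pos.mpr (hx i)
  have hSU : S ⊆ U := by
    intro y hy i
    intro h
    have := hy i
    rw [h, mul_zero] at this
    exact lt_irrefl 0 this
  apply subset_antisymm
  · -- component ⊆ S : sign is constant on connected sets
    intro y hy i
    have hyU : y ∈ U := connectedComponentIn_subset U x hy
    by_contra hcon
    push_neg at hcon
    have hne : (a i * x.1 + b i * x.2) * (a i * y.1 + b i * y.2) ≠ 0 :=
      mul_ne_zero (hx i) (hyU i)
    have hlt : (a i * x.1 + b i * x.2) * (a i * y.1 + b i * y.2) < 0 :=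
      lt_of_le_of_ne hcon hne
    have hpc : IsPreconnected (connectedComponentIn U x) := isPreconnected_connectedComponentIn
    have hxc : x ∈ connectedComponentIn U x := mem_connectedComponentIn hxU
    have hcont : ContinuousOn (fun y : ℝ × ℝ => a i * y.1 + b i * y.2)
        (connectedComponentIn U x) := by fun_prop
    have h0 : (0:ℝ) ∈ (fun y : ℝ × ℝ => a i * y.1 + b i * y.2) '' (connectedComponentIn U x) := by
      rcases le_total (a i * x.1 + b i * x.2) 0 with h | h
      · exact hpc.intermediate_value hxc hy hcont ⟨h, by nlinarith⟩
      · exact hpc.intermediate_value hy hxc hcont ⟨by nlinarith, h⟩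
    obtain ⟨z, hz, hz0⟩ := h0
    exact (connectedComponentIn_subset U x hz) i hz0
  · exact (cell_convex a b _).isPreconnected.subset_connectedComponentIn hxS hSU

/-- If two cells of a central line arrangement share a boundary ray,
then the union of their closures is convex. -/
theorem stmt6 (k : ℕ) (a b : Fin k → ℝ)
    (hab : ∀ i, (a i, b i) ≠ ((0 : ℝ), (0 : ℝ)))
    (L : Fin k → Set (ℝ × ℝ)) (hL : ∀ i, L i = {p : ℝ × ℝ | a i * p.1 + b i * p.2 = 0})
    (hdist : ∀ i j, i ≠ j → L i ≠ L j)
    (p q : ℝ × ℝ) (hp : p ∈ (⋃ i, L i)ᶜ) (hq : q ∈ (⋃ i, L i)ᶜ)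
    (hcells : connectedComponentIn (⋃ i, L i)ᶜ p ≠ connectedComponentIn (⋃ i, L i)ᶜ q)
    (d : ℝ × ℝ) (hd : d ≠ 0)
    (hray : {x : ℝ × ℝ | ∃ c : ℝ, 0 ≤ c ∧ x = c • d} ⊆
      closure (connectedComponentIn (⋃ i, L i)ᶜ p) ∩
      closure (connectedComponentIn (⋃ i, L i)ᶜ q)) :
    Convex ℝ (closure (connectedComponentIn (⋃ i, L i)ᶜ p) ∪
      closure (connectedComponentIn (⋃ i, L i)ᶜ q)) := by
  have hUeq : (⋃ i, L i)ᶜ = {y : ℝ × ℝ | ∀ i, a i * y.1 + b i * y.2 ≠ 0} := by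
    ext y; simp [hL]
  rw [hUeq] at hp hq hcells hray ⊢
  have hp' : ∀ i, a i * p.1 + b i * p.2 ≠ 0 := hp
  have hq' : ∀ i, a i * q.1 + b i * q.2 ≠ 0 := hq
  set P := fun i => a i * p.1 + b i * p.2 with hP
  set Q := fun i => a i * q.1 + b i * q.2 with hQ
  have hp2 : ∀ i, P i ≠ 0 := hp'
  have hq2 : ∀ i, Q i ≠ 0 := hq'
  rw [comp_eq a b p hp', comp_eq a b q hq',
    cell_closure a b P p (fun i => mul_self_pos.mpr (hp' i)),
    cell_closure a b Q q (fun i => mul_self_pos.mpr (hq' i))] at hray ⊢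
  -- d belongs to both closed cells
  have hdmem := hray ⟨1, zero_le_one, (one_smul ℝ d).symm⟩
  have hdP : ∀ i, 0 ≤ P i * (a i * d.1 + b i * d.2) := hdmem.1
  have hdQ : ∀ i, 0 ≤ Q i * (a i * d.1 + b i * d.2) := hdmem.2
  -- there is j with P j * Q j < 0
  have hj : ∃ j, P j * Q j < 0 := by
    by_contra hcon
    push_neg at hcon
    apply hcells
    rw [comp_eq a b p hp', comp_eq a b q hq']
    have hqS : ∀ i, 0 < P i * Q i := fun i =>
      lt_of_le_of_ne (hcon i) (Ne.symm (mul_ne_zero (hp' i) (hq' i)))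
    have : q ∈ {y : ℝ × ℝ | ∀ i, 0 < P i * (a i * y.1 + b i * y.2)} := hqS
    -- components equal since q in cell of p
    have := connectedComponentIn_eq (x := p)
      (F := {y : ℝ × ℝ | ∀ i, a i * y.1 + b i * y.2 ≠ 0})
      (by rw [comp_eq a b p hp']; exact this)
    rw [comp_eq a b p hp', comp_eq a b q hq'] at this
    exact this
  obtain ⟨j, hj⟩ := hj
  -- f j d = 0
  have hfjd : a j * d.1 + b j * d.2 = 0 := by
    by_contra h
    have h1 : 0 < P j * (a j * d.1 + b j * d.2) :=
      lt_of_le_of_ne (hdP j) (Ne.symm (mul_ne_zero (hp' j) h))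
    have h2 : 0 < Q j * (a j * d.1 + b j * d.2) :=
      lt_of_le_of_ne (hdQ j) (Ne.symm (mul_ne_zero (hq' j) h))
    nlinarith [mul_pos h1 h2, sq_nonneg (a j * d.1 + b j * d.2)]
  -- for i ≠ j, f i d ≠ 0
  have hfid : ∀ i, i ≠ j → a i * d.1 + b i * d.2 ≠ 0 := by
    intro i hij hcon
    apply hdist i j hij
    have hdet : a i * b j - a j * b i = 0 := by
      have h1 : d.1 * (a i * b j - a j * b i) = 0 := by
        linear_combination b j * hcon - b i * hfjd
      have h2 : d.2 * (a i * b j - a j * b i) = 0 := by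
        linear_combination a i * hfjd - a j * hcon
      have : d.1 ≠ 0 ∨ d.2 ≠ 0 := by
        by_contra hcon2
        push_neg at hcon2
        exact hd (Prod.ext hcon2.1 hcon2.2)
      rcases this with h | h
      · exact (mul_eq_zero.1 h1).resolve_left h
      · exact (mul_eq_zero.1 h2).resolve_left h
    rw [hL i, hL j]
    have habi := hab i
    have habj := hab j
    have hi0 : a i ≠ 0 ∨ b i ≠ 0 := by
      by_contra hc; push_neg at hc; exact habi (by rw [hc.1, hc.2])
    have hj0 : a j ≠ 0 ∨ b j ≠ 0 := by
      by_contra hc; push_neg at hc; exact habj (by rw [hc.1, hc.2])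
    ext z
    simp only [mem_setOf_eq]
    constructor
    · intro hz
      have e1 : b i * (a j * z.1 + b j * z.2) = 0 := by
        linear_combination b j * hz - z.1 * hdet
      have e2 : a i * (a j * z.1 + b j * z.2) = 0 := by
        linear_combination a j * hz + z.2 * hdet
      rcases hi0 with h | h
      · exact (mul_eq_zero.1 e2).resolve_left h
      · exact (mul_eq_zero.1 e1).resolve_left h
    · intro hz
      have e1 : b j * (a i * z.1 + b i * z.2) = 0 := by
        linear_combination b i * hz + z.1 * hdet
      have e2 : a j * (a i * z.1 + b i * z.2) = 0 := by
        linear_combination a i * hz - z.2 * hdet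
      rcases hj0 with h | h
      · exact (mul_eq_zero.1 e2).resolve_left h
      · exact (mul_eq_zero.1 e1).resolve_left h
  -- for i ≠ j, P i * Q i > 0
  have hPQ : ∀ i, i ≠ j → 0 < P i * Q i := by
    intro i hij
    have h1 : 0 < P i * (a i * d.1 + b i * d.2) :=
      lt_of_le_of_ne (hdP i) (Ne.symm (mul_ne_zero (hp' i) (hfid i hij)))
    have h2 : 0 < Q i * (a i * d.1 + b i * d.2) :=
      lt_of_le_of_ne (hdQ i) (Ne.symm (mul_ne_zero (hq' i) (hfid i hij)))
    nlinarith [mul_pos h1 h2, sq_nonneg (a i * d.1 + b i * d.2)]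
  -- union is the convex set T
  have hunion : {y : ℝ × ℝ | ∀ i, 0 ≤ P i * (a i * y.1 + b i * y.2)} ∪
      {y : ℝ × ℝ | ∀ i, 0 ≤ Q i * (a i * y.1 + b i * y.2)} =
      {y : ℝ × ℝ | ∀ i, i ≠ j → 0 ≤ P i * (a i * y.1 + b i * y.2)} := by
    ext y
    simp only [mem_union, mem_setOf_eq]
    constructor
    · rintro (h | h) i hij
      · exact h i
      · have := h i
        have hpq := hPQ i hij
        nlinarith [mul_nonneg this hpq.le, mul_self_pos.mpr (hq2 i)]
    · intro h
      rcases le_or_gt 0 (P j * (a j * y.1 + b j * y.2)) with hc | hc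
      · left
        intro i
        by_cases hij : i = j
        · rw [hij]; exact hc
        · exact h i hij
      · right
        intro i
        by_cases hij : i = j
        · subst hij
          nlinarith [mul_pos_of_neg_of_neg hc hj, mul_self_pos.mpr (hp2 i)]
        · have := h i hij
          have hpq := hPQ i hij
          nlinarith [mul_nonneg this hpq.le, mul_self_pos.mpr (hp2 i)]
  rw [hunion]
  -- convexity of T
  intro y hy z hz s t hs ht hst i hij
  have h1 := hy i hij
  have h2 := hz i hij
  have e1 : (s • y + t • z : ℝ × ℝ).1 = s * y.1 + t * z.1 := rfl
  have e2 : (s • y + t • z : ℝ × ℝ).2 = s * y.2 + t * z.2 := rfl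
  simp only [mem_setOf_eq, e1, e2]
  nlinarith
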